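/- Hazard rates of UGAT lie in (0,1): for all x ∈ ℕ^r and each i, 0 < 1 − α_{i-1}·M(β+Σx_j+1, s, α)/M(β+Σx_j, s, α) < 1; equivalently, 0 < α_{i-1}·M(β+X+1,s,α) < M(β+X,s,α) for all X ∈ ℕ. -/
import Mathlib

open scoped BigOperators

set_option maxHeartbeats 1000000

/-- Normalization constant of the UGAT distribution. -/
noncomputable def M (r : ℕ) (β s : ℝ) (α : Fin r → ℝ) : ℝ :=
  ∑' ℓ : Fin r → ℕ, (∏ i, α i ^ ℓ i) / ((∑ i, (ℓ i : ℝ)) + β) ^ s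

/-- The UGAT joint probability mass function. -/
noncomputable def ugatPmf (r : ℕ) (β s : ℝ) (α : Fin r → ℝ) (x : Fin r → ℕ) : ℝ :=
  (∏ i, α i ^ x i) / (((∑ i, (x i : ℝ)) + β) ^ s * M r β s α)

private lemma summable_prod_pow : ∀ (r : ℕ) (α : Fin r → ℝ),
    (∀ i, α i ∈ Set.Ioo (0 : ℝ) 1) →
    Summable fun ℓ : Fin r → ℕ => ∏ i, α i ^ ℓ i := by
  intro r
  induction r with
  | zero => intro α hα; exact .of_finite
  | succ n ih =>
    intro α hα
    have h0 := hα 0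
    have htail := ih (fun i => α i.succ) (fun i => hα i.succ)
    have hgeo : Summable fun k : ℕ => α 0 ^ k :=
      summable_geometric_of_lt_one (le_of_lt (hα 0).1) (hα 0).2
    have hmul : Summable fun p : ℕ × (Fin n → ℕ) =>
        (α 0 ^ p.1) * ∏ i, α i.succ ^ p.2 i := by
      apply Summable.mul_of_nonneg hgeo htail
      · exact fun k => pow_nonneg (le_of_lt h0.1) _
      · exact fun ℓ => Finset.prod_nonneg fun i _ => pow_nonneg (le_of_lt (hα i.succ).1) _
    refine ((Fin.consEquiv (fun _ : Fin (n+1) => ℕ)).summable_iff).mp ?_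
    have he : ((fun ℓ : Fin (n+1) → ℕ => ∏ i, α i ^ ℓ i) ∘ (Fin.consEquiv fun _ => ℕ)) =
        fun p : ℕ × (Fin n → ℕ) => (α 0 ^ p.1) * ∏ i, α i.succ ^ p.2 i := by
      funext p
      simp [Fin.consEquiv, Fin.prod_univ_succ]
    rw [he]
    exact hmul

private lemma term_pos {r : ℕ} {β s : ℝ} (hβ : 0 < β) {α : Fin r → ℝ}
    (hα : ∀ i, α i ∈ Set.Ioo (0 : ℝ) 1) (ℓ : Fin r → ℕ) :
    0 < (∏ i, α i ^ ℓ i) / ((∑ i, (ℓ i : ℝ)) + β) ^ s := by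
  apply div_pos
  · exact Finset.prod_pos fun i _ => pow_pos (hα i).1 _
  · exact Real.rpow_pos_of_pos (by positivity) _

private lemma summable_term {r : ℕ} {β s : ℝ} (hβ : 0 < β) (hs : 0 < s) {α : Fin r → ℝ}
    (hα : ∀ i, α i ∈ Set.Ioo (0 : ℝ) 1) :
    Summable fun ℓ : Fin r → ℕ => (∏ i, α i ^ ℓ i) / ((∑ i, (ℓ i : ℝ)) + β) ^ s := by
  have hg : Summable fun ℓ : Fin r → ℕ => (β ^ s)⁻¹ * ∏ i, α i ^ ℓ i :=
    (summable_prod_pow r α hα).mul_left _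
  apply Summable.of_nonneg_of_le _ _ hg
  · exact fun ℓ => le_of_lt (term_pos hβ hα ℓ)
  · intro ℓ
    rw [div_eq_inv_mul]
    apply mul_le_mul_of_nonneg_right
    · apply inv_anti₀ (Real.rpow_pos_of_pos hβ _)
      exact Real.rpow_le_rpow (le_of_lt hβ)
        (le_add_of_nonneg_left (Finset.sum_nonneg fun i _ => Nat.cast_nonneg _)) (le_of_lt hs)
    · exact Finset.prod_nonneg fun i _ => pow_nonneg (le_of_lt (hα i).1) _

private lemma M_pos {r : ℕ} {β s : ℝ} (hβ : 0 < β) (hs : 0 < s) {α : Fin r → ℝ}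
    (hα : ∀ i, α i ∈ Set.Ioo (0 : ℝ) 1) : 0 < M r β s α :=
  Summable.tsum_pos (summable_term hβ hs hα) (fun ℓ => le_of_lt (term_pos hβ hα ℓ))
    0 (term_pos hβ hα 0)

private lemma key {r : ℕ} {β s : ℝ} (hβ : 0 < β) (hs : 0 < s) {α : Fin r → ℝ}
    (hα : ∀ i, α i ∈ Set.Ioo (0 : ℝ) 1) (i : Fin r) :
    α i * M r (β + 1) s α < M r β s α := by
  set f : (Fin r → ℕ) → ℝ :=
    fun ℓ => (∏ j, α j ^ ℓ j) / ((∑ j, (ℓ j : ℝ)) + β) ^ s with hf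
  set J : (Fin r → ℕ) → (Fin r → ℕ) := fun ℓ => Function.update ℓ i (ℓ i + 1) with hJ
  have hJinj : Function.Injective J := by
    intro a b hab
    funext j
    have := congrFun hab j
    by_cases h : j = i
    · subst h; simpa [J, Function.update_self] using this
    · simpa [J, Function.update_of_ne h] using this
  have hcomp : ∀ ℓ, f (J ℓ) =
      α i * ((∏ j, α j ^ ℓ j) / ((∑ j, (ℓ j : ℝ)) + (β + 1)) ^ s) := by
    intro ℓ
    have hprod : (∏ j, α j ^ (J ℓ j)) = α i * ∏ j, α j ^ ℓ j := by
      have : ∀ j, α j ^ (J ℓ j) = Function.update (fun j => α j ^ ℓ j) i (α i ^ (ℓ i + 1)) j := by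
        intro j
        exact Function.apply_update (fun j n => α j ^ n) ℓ i (ℓ i + 1) j
      rw [Finset.prod_congr rfl (fun j _ => this j),
        Finset.prod_update_of_mem (Finset.mem_univ i), Finset.sdiff_singleton_eq_erase,
        ← Finset.mul_prod_erase Finset.univ (fun j => α j ^ ℓ j) (Finset.mem_univ i),
        pow_succ]
      ring
    have hsum : (∑ j, ((J ℓ j : ℕ) : ℝ)) = (∑ j, (ℓ j : ℝ)) + 1 := by
      have : ∀ j, ((J ℓ j : ℕ) : ℝ) =
          Function.update (fun j => ((ℓ j : ℕ) : ℝ)) i ((ℓ i : ℝ) + 1) j := by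
        intro j
        by_cases h : j = i
        · subst h; simp [J]
        · simp [J, Function.update_of_ne h]
      rw [Finset.sum_congr rfl (fun j _ => this j),
        Finset.sum_update_of_mem (Finset.mem_univ i), Finset.sdiff_singleton_eq_erase,
        ← Finset.add_sum_erase Finset.univ (fun j => ((ℓ j : ℕ) : ℝ)) (Finset.mem_univ i)]
      ring
    rw [hf]
    simp only [hprod, hsum]
    rw [mul_div_assoc]
    ring_nf
  have hfs : Summable f := summable_term hβ hs hα
  have hfr : Summable (f ∘ ((↑) : Set.range J → (Fin r → ℕ))) :=
    hfs.subtype _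
  have hfc : Summable (f ∘ ((↑) : ↥(Set.range J)ᶜ → (Fin r → ℕ))) :=
    hfs.subtype _
  have hsplit : (∑' m : Set.range J, f m) + ∑' m : ↥(Set.range J)ᶜ, f m = ∑' m, f m :=
    Summable.tsum_add_tsum_compl hfr hfc
  have hrange : (∑' m : Set.range J, f m) = α i * M r (β + 1) s α := by
    rw [tsum_range f hJinj]
    simp only [hcomp]
    rw [tsum_mul_left]
    rfl
  have h0 : (0 : Fin r → ℕ) ∈ (Set.range J)ᶜ := by
    intro ⟨ℓ, hℓ⟩
    have := congrFun hℓ i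
    simp [J] at this
  have hpos : 0 < ∑' m : ↥(Set.range J)ᶜ, f m :=
    Summable.tsum_pos hfc (fun m => le_of_lt (term_pos hβ hα m)) ⟨0, h0⟩
      (term_pos hβ hα 0)
  have hM : M r β s α = ∑' m, f m := rfl
  have : M r β s α = α i * M r (β + 1) s α + ∑' m : ↥(Set.range J)ᶜ, f m := by
    rw [hM, ← hsplit, hrange]
  linarith

theorem ugat_hazard_mem_Ioo (r : ℕ) (hr : 1 ≤ r) (β s : ℝ) (hβ : 0 < β) (hs : 0 < s)
    (α : Fin r → ℝ) (hα : ∀ i, α i ∈ Set.Ioo (0 : ℝ) 1) (x : Fin r → ℕ) (i : Fin r) :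
    (1 - α i * M r (β + (∑ j, (x j : ℝ)) + 1) s α / M r (β + ∑ j, (x j : ℝ)) s α)
        ∈ Set.Ioo (0 : ℝ) 1
      ∧ ∀ X : ℕ, 0 < α i * M r (β + X + 1) s α
          ∧ α i * M r (β + X + 1) s α < M r (β + X) s α := by
  have hβ' : ∀ c : ℝ, 0 ≤ c → 0 < β + c := fun c hc => by linarith
  have hsum0 : (0:ℝ) ≤ ∑ j, (x j : ℝ) := Finset.sum_nonneg fun j _ => Nat.cast_nonneg _
  have hb1 : 0 < β + ∑ j, (x j : ℝ) := hβ' _ hsum0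
  constructor
  · have hk := key (β := β + ∑ j, (x j : ℝ)) hb1 hs hα i
    have hMpos := M_pos hb1 hs hα (r := r)
    have hM1pos := M_pos (β := β + (∑ j, (x j : ℝ)) + 1) (by linarith) hs hα (r := r)
    have hApos : 0 < α i * M r (β + (∑ j, (x j : ℝ)) + 1) s α :=
      mul_pos (hα i).1 hM1pos
    constructor
    · have : α i * M r (β + (∑ j, (x j : ℝ)) + 1) s α / M r (β + ∑ j, (x j : ℝ)) s α < 1 :=
        (div_lt_one hMpos).mpr hk
      linarith
    · have : 0 < α i * M r (β + (∑ j, (x j : ℝ)) + 1) s α / M r (β + ∑ j, (x j : ℝ)) s α :=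
        div_pos hApos hMpos
      linarith
  · intro X
    have hbX : 0 < β + (X : ℝ) := hβ' _ (Nat.cast_nonneg _)
    exact ⟨mul_pos (hα i).1 (M_pos (β := β + X + 1) (by linarith) hs hα),
      key hbX hs hα i⟩
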